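/- arXiv:1903.07229 — 3 statements merged into one kernel-verified Lean document; each statement's English description precedes it below -/
import Mathlib

section
/- The number ε_n of skew-symmetric (n,n)-clans in the largest sect satisfies ε_0 = 1, ε_1 = 2, and the recurrence ε_n = 2·ε_{n−1} + (n−1)·ε_{n−2} for all n ≥ 2. -/
/-- A skew-symmetric `(n,n)`-clan, encoded (via the standard bijection with signed
involutions) as a pair `(σ, s)` where `σ` is an involution of the `2n` positions whose
2-cycles are the pairs of positions carrying matching natural numbers, and `s` records
the signs at the fixed points (`true` = `+`, `false` = `−`; `s` is normalized to `true`
on non-fixed points).  The conditions say: `σ` is an involution; `s` is normalized;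
there are equally many `+`'s and `−`'s among the sign symbols; and the clan equals its
reverse with all signs interchanged (`Fin.rev` is the reflection `i ↦ 2n+1−i`). -/
def IsSkewClan (n : ℕ) (σ : Equiv.Perm (Fin (2 * n))) (s : Fin (2 * n) → Bool) : Prop :=
  Function.Involutive σ ∧
  (∀ i, σ i ≠ i → s i = true) ∧
  (Finset.univ.filter (fun i => σ i = i ∧ s i = true)).card =
    (Finset.univ.filter (fun i => σ i = i ∧ s i = false)).card ∧
  (∀ i, σ (Fin.rev i) = Fin.rev (σ i)) ∧
  (∀ i, σ i = i → s (Fin.rev i) = !(s i))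

/-- `Z_n`, the number of skew-symmetric `(n,n)`-clans. -/
noncomputable def Znum (n : ℕ) : ℕ :=
  Nat.card {p : Equiv.Perm (Fin (2 * n)) × (Fin (2 * n) → Bool) // IsSkewClan n p.1 p.2}

/-- A skew-symmetric `(n,n)`-clan `(σ, s)` lies in the *largest sect* if every `−` sign
(`s i = false` at a fixed point) occupies a position in the first half, every `+` sign
occupies a position in the second half, and every pair of matching natural numbers has
one position in each half. -/
def IsLargestSectClan (n : ℕ) (σ : Equiv.Perm (Fin (2 * n))) (s : Fin (2 * n) → Bool) :
    Prop :=
  IsSkewClan n σ s ∧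
  (∀ i : Fin (2 * n), σ i = i → (s i = false ↔ i.val < n)) ∧
  (∀ i : Fin (2 * n), σ i ≠ i → (i.val < n ↔ ¬ (σ i).val < n))

/-- `ε_n`, the number of skew-symmetric `(n,n)`-clans in the largest sect. -/
noncomputable def epsnum (n : ℕ) : ℕ :=
  Nat.card {p : Equiv.Perm (Fin (2 * n)) × (Fin (2 * n) → Bool) //
    IsLargestSectClan n p.1 p.2}

/-! A largest-sect skew-symmetric clan is determined by its first half: each of the first `n`
positions carries either a `−` or a number whose partner sits in the second half, and
skew-symmetry matches the mirror image of that partner back. Reflecting partners into the first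
half therefore turns the clan into an involution of `{1, …, n}` whose fixed points carry one of
two colours (a `−`, or a number matched with its own mirror position). Such coloured involutions
are counted by the fate of one point: a fixed point of either colour, or a 2-cycle with one of
the other points. -/

open Equiv Function

lemma Function.Involutive.of_injective_semiconj {γ δ : Type} {ι : γ → δ} (hι : Injective ι)
    {τ : δ → δ} (hτ : Involutive τ) {ρ : γ → γ} (h : ∀ c, ι (ρ c) = τ (ι c)) : Involutive ρ :=
  fun c => hι (by rw [h, h, hτ])

section RemoveNone

variable {α : Type}

lemma Equiv.some_removeNone_of_ne_none {τ : Perm (Option α)} {a : α} (h : τ (some a) ≠ none) :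
    some (removeNone τ a) = τ (some a) :=
  removeNone_some τ (Option.ne_none_iff_exists'.1 h)

lemma Equiv.some_some_removeNone_removeNone {τ : Perm (Option (Option α))}
    (hnone : τ none = some none) (hsome_none : τ (some none) = none) (a : α) :
    some (some (removeNone (removeNone τ) a)) = τ (some (some a)) := by
  have h₁ : τ (some (some a)) ≠ none := fun h =>
    Option.some_ne_none a (Option.some_injective _ (τ.injective (h.trans hsome_none.symm)))
  have h₂ : removeNone τ (some a) ≠ none := fun h => by
    have := some_removeNone_of_ne_none h₁
    rw [h, ← hnone] at this
    exact Option.some_ne_none _ (τ.injective this).symm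
  rw [some_removeNone_of_ne_none h₂, some_removeNone_of_ne_none h₁]

variable [DecidableEq α]

def swapNoneExtend (ρ : Perm α) : Perm (Option (Option α)) :=
  (optionCongr (optionCongr ρ)).trans (Equiv.swap none (some none))

@[simp] lemma swapNoneExtend_none (ρ : Perm α) : swapNoneExtend ρ none = some none := by
  simp [swapNoneExtend]

@[simp] lemma swapNoneExtend_some_none (ρ : Perm α) : swapNoneExtend ρ (some none) = none := by
  simp [swapNoneExtend]

@[simp] lemma swapNoneExtend_some_some (ρ : Perm α) (a : α) :
    swapNoneExtend ρ (some (some a)) = some (some (ρ a)) := by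
  simp [swapNoneExtend, swap_apply_of_ne_of_ne]

end RemoveNone

/-- An involution whose fixed points are coloured by `Bool`; the colour is normalised to `true`
off the fixed points. -/
def IsSignedInvolution {α : Type} (τ : Perm α) (f : α → Bool) : Prop :=
  Involutive τ ∧ ∀ a, τ a ≠ a → f a = true

abbrev SignedInvolution (α : Type) : Type :=
  {p : Perm α × (α → Bool) // IsSignedInvolution p.1 p.2}

lemma IsSignedInvolution.sign_apply_eq_true {α : Type} {τ : Perm α} {f : α → Bool}
    (h : IsSignedInvolution τ f) {a : α} (ha : f a = true) : f (τ a) = true := by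
  by_cases hfix : τ a = a
  · rwa [hfix]
  · exact h.2 _ fun h' => hfix (τ.injective h')

namespace SignedInvolution

variable {α β : Type}

def congr (e : α ≃ β) : SignedInvolution α ≃ SignedInvolution β :=
  (e.permCongr.prodCongr (e.arrowCongr (Equiv.refl Bool))).subtypeEquiv fun p => by
    simp only [IsSignedInvolution, Involutive, prodCongr_apply, Prod.map, permCongr_apply,
      arrowCongr_apply, refl_apply, comp_apply, e.symm_apply_apply, ne_eq, e.apply_eq_iff_eq,
      e.symm.forall_congr_left, e.symm_symm]

lemma card_congr (e : α ≃ β) : Nat.card (SignedInvolution α) = Nat.card (SignedInvolution β) :=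
  Nat.card_congr (congr e)

def fiberCongr (e : α ≃ β) (a b : α) :
    {p : SignedInvolution α // p.1.1 a = b} ≃ {p : SignedInvolution β // p.1.1 (e a) = e b} :=
  (congr e).subtypeEquiv fun p => by
    change _ ↔ e (p.1.1 (e.symm (e a))) = e b
    simp

def optionNoneFiberEquiv :
    {p : SignedInvolution (Option α) // p.1.1 none = none} ≃ Bool × SignedInvolution α where
  toFun p := (p.1.1.2 none, ⟨(removeNone p.1.1.1, p.1.1.2 ∘ some), by
    obtain ⟨⟨⟨τ, f⟩, hτ, hf⟩, hnone⟩ := p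
    have hsome (a : α) : some (removeNone τ a) = τ (some a) :=
      some_removeNone_of_ne_none fun h =>
        Option.some_ne_none a (τ.injective (h.trans hnone.symm))
    refine ⟨hτ.of_injective_semiconj (Option.some_injective α) hsome, fun a ha => hf _ ?_⟩
    rw [← hsome]
    exact fun h => ha (Option.some_injective α h)⟩)
  invFun q := ⟨⟨(optionCongr q.2.1.1, fun o => o.elim q.1 q.2.1.2), by
    obtain ⟨b, ⟨τ, f⟩, hτ, hf⟩ := q
    refine ⟨fun o => ?_, fun o ho => ?_⟩ <;> cases o
    · rfl
    · simp [hτ _]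
    · simp at ho
    · exact hf _ (by simpa using ho)⟩, rfl⟩
  left_inv p := by
    obtain ⟨⟨⟨τ, f⟩, hτ, hf⟩, hnone⟩ := p
    refine Subtype.ext (Subtype.ext (Prod.ext (Equiv.ext fun o => ?_) (funext fun o => ?_)))
    all_goals cases o
    · exact hnone.symm
    · exact some_removeNone_of_ne_none fun h =>
        Option.some_ne_none _ (τ.injective (h.trans hnone.symm))
    all_goals rfl
  right_inv q := by
    obtain ⟨b, ⟨τ, f⟩, hτ, hf⟩ := q
    simp only [removeNone_optionCongr]
    rfl

def optionSomeNoneFiberEquiv [DecidableEq α] :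
    {p : SignedInvolution (Option (Option α)) // p.1.1 none = some none} ≃
      SignedInvolution α where
  toFun p := ⟨(removeNone (removeNone p.1.1.1), p.1.1.2 ∘ some ∘ some), by
    obtain ⟨⟨⟨τ, f⟩, hτ, hf⟩, hnone⟩ := p
    have hsome := some_some_removeNone_removeNone hnone (by rw [← hnone, hτ])
    refine ⟨hτ.of_injective_semiconj
      (Option.some_injective _ |>.comp (Option.some_injective α)) hsome,
      fun a ha => hf _ fun h => ha ?_⟩
    exact Option.some_injective _ (Option.some_injective _ ((hsome a).trans h))⟩
  invFun q := ⟨⟨(swapNoneExtend q.1.1, fun o => o.elim true fun o' => o'.elim true q.1.2), by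
    obtain ⟨⟨ρ, f⟩, hρ, hf⟩ := q
    refine ⟨fun o => ?_, fun o ho => ?_⟩
    · rcases o with _ | _ | a <;> simp [hρ _]
    · rcases o with _ | _ | a
      · rfl
      · rfl
      · exact hf _ (by simpa using ho)⟩, by simp⟩
  left_inv p := by
    obtain ⟨⟨⟨τ, f⟩, hτ, hf⟩, hnone⟩ := p
    have hsome_none : τ (some none) = none := by rw [← hnone, hτ]
    refine Subtype.ext (Subtype.ext (Prod.ext (Equiv.ext fun o => ?_) (funext fun o => ?_)))
    · rcases o with _ | _ | a
      · simp [hnone]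
      · simp [hsome_none]
      · simpa using some_some_removeNone_removeNone hnone hsome_none a
    · rcases o with _ | _ | a
      · exact (hf none (by simp [hnone])).symm
      · exact (hf (some none) (by simp [hsome_none])).symm
      · rfl
  right_inv q := by
    obtain ⟨⟨ρ, f⟩, hρ, hf⟩ := q
    refine Subtype.ext (Prod.ext (Equiv.ext fun a => ?_) rfl)
    simpa using some_some_removeNone_removeNone (swapNoneExtend_none ρ)
      (swapNoneExtend_some_none ρ) a

theorem card_option [Fintype α] [DecidableEq α] :
    Nat.card (SignedInvolution (Option α)) =
      2 * Nat.card (SignedInvolution α) + ∑ a : α, Nat.card (SignedInvolution {b // b ≠ a}) := by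
  have hfiber_some (a : α) :
      Nat.card {p : SignedInvolution (Option α) // p.1.1 none = some a} =
        Nat.card (SignedInvolution {b // b ≠ a}) :=
    Nat.card_congr ((fiberCongr (optionCongr (optionSubtypeNe a)) none (some none)).symm.trans
      optionSomeNoneFiberEquiv)
  rw [← Nat.card_congr (sigmaFiberEquiv fun p : SignedInvolution (Option α) => p.1.1 none),
    Nat.card_sigma, Fintype.sum_option, Nat.card_congr optionNoneFiberEquiv, Nat.card_prod,
    Nat.card_eq_fintype_card (α := Bool), Fintype.card_bool]
  simp only [hfiber_some]

lemma card_of_isEmpty [IsEmpty α] : Nat.card (SignedInvolution α) = 1 :=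
  Nat.card_eq_one_iff_unique.2
    ⟨⟨fun _ _ => Subtype.ext (Prod.ext (Subsingleton.elim _ _) (Subsingleton.elim _ _))⟩,
      ⟨⟨(1, isEmptyElim), fun a => isEmptyElim a, fun a => isEmptyElim a⟩⟩⟩

lemma card_fin_one : Nat.card (SignedInvolution (Fin 1)) = 2 := by
  rw [card_congr (finSuccEquiv 0), card_option, card_of_isEmpty]
  simp

lemma card_fin_succ_succ (n : ℕ) :
    Nat.card (SignedInvolution (Fin (n + 2))) =
      2 * Nat.card (SignedInvolution (Fin (n + 1))) +
        (n + 1) * Nat.card (SignedInvolution (Fin n)) := by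
  rw [card_congr (finSuccEquiv (n + 1)), card_option]
  simp only [← card_congr (finSuccAboveEquiv _), Finset.sum_const, Finset.card_univ,
    Fintype.card_fin, smul_eq_mul]

end SignedInvolution

/-- A largest-sect skew-symmetric clan on the positions `β × Bool`: `(b, false)` lies in the
first half and `(b, true)` is its mirror image. -/
def IsFoldedLargestSectClan {β : Type} (σ : Perm (β × Bool)) (s : β × Bool → Bool) : Prop :=
  Involutive σ ∧
  (∀ x, σ x ≠ x → s x = true) ∧
  (∀ x : β × Bool, σ (x.1, !x.2) = ((σ x).1, !(σ x).2)) ∧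
  (∀ x, σ x = x → s (x.1, !x.2) = !s x) ∧
  (∀ x, σ x = x → (s x = false ↔ x.2 = false)) ∧
  (∀ x, σ x ≠ x → (x.2 = false ↔ ¬(σ x).2 = false))

def foldedPerm {β : Type} (τ : Perm β) (f : β → Bool) (x : β × Bool) : β × Bool :=
  if f x.1 then (τ x.1, !x.2) else x

lemma IsSignedInvolution.involutive_foldedPerm {β : Type} {τ : Perm β} {f : β → Bool}
    (h : IsSignedInvolution τ f) : Involutive (foldedPerm τ f) := by
  rintro ⟨b, c⟩
  by_cases hb : f b
  · simp [foldedPerm, hb, h.sign_apply_eq_true hb, h.1 b]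
  · simp [foldedPerm, hb]

namespace IsFoldedLargestSectClan

variable {β : Type} {σ : Perm (β × Bool)} {s : β × Bool → Bool}

lemma apply_false (h : IsFoldedLargestSectClan σ s) (b : β) :
    σ (b, false) = if s (b, false) then ((σ (b, false)).1, true) else (b, false) := by
  obtain ⟨-, hnorm, -, -, hsect, hcross⟩ := h
  by_cases hfix : σ (b, false) = (b, false)
  · rw [if_neg (by simpa using (hsect _ hfix).2 rfl), hfix]
  · rw [if_pos (hnorm _ hfix)]
    exact Prod.ext rfl (by simpa using (hcross _ hfix).1 rfl)

lemma apply_eq (h : IsFoldedLargestSectClan σ s) (x : β × Bool) :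
    σ x = if s (x.1, false) then ((σ (x.1, false)).1, !x.2) else x := by
  obtain ⟨b, _ | _⟩ := x
  · exact h.apply_false b
  · have := h.2.2.1 (b, false)
    rw [h.apply_false b] at this ⊢
    split_ifs at this ⊢ <;> simpa using this

lemma sign_true (h : IsFoldedLargestSectClan σ s) (b : β) : s (b, true) = true := by
  by_cases hfix : σ (b, true) = (b, true)
  · simpa using (h.2.2.2.2.1 _ hfix).not
  · exact h.2.1 _ hfix

lemma involutive_fst (h : IsFoldedLargestSectClan σ s) :
    Involutive fun b => (σ (b, false)).1 := by
  intro b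
  show (σ ((σ (b, false)).1, false)).1 = b
  have hσσ := h.1 (b, false)
  rw [h.apply_false b] at hσσ ⊢
  split_ifs at hσσ ⊢ with hs
  · rw [h.apply_eq] at hσσ
    split_ifs at hσσ
    · exact congrArg Prod.fst hσσ
    · simp at hσσ
  · rw [h.apply_false b, if_neg hs]

lemma isSignedInvolution (h : IsFoldedLargestSectClan σ s) :
    IsSignedInvolution (h.involutive_fst.toPerm _) fun b => s (b, false) := by
  refine ⟨h.involutive_fst, fun b hb => ?_⟩
  by_contra hs
  rw [Involutive.coe_toPerm, h.apply_false b, if_neg hs] at hb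
  exact hb rfl

lemma of_isSignedInvolution {τ : Perm β} {f : β → Bool} (h : IsSignedInvolution τ f) :
    IsFoldedLargestSectClan (h.involutive_foldedPerm.toPerm _) (fun x => x.2 || f x.1) := by
  refine ⟨h.involutive_foldedPerm, ?_, ?_, ?_, ?_, ?_⟩ <;> rintro ⟨b, c⟩ <;>
    by_cases hb : f b <;> cases c <;> simp [foldedPerm, hb]

def equivSignedInvolution :
    {p : Perm (β × Bool) × (β × Bool → Bool) // IsFoldedLargestSectClan p.1 p.2} ≃
      SignedInvolution β where
  toFun p := ⟨(p.2.involutive_fst.toPerm _, fun b => p.1.2 (b, false)), p.2.isSignedInvolution⟩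
  invFun q := ⟨(q.2.involutive_foldedPerm.toPerm _, fun x => x.2 || q.1.2 x.1),
    of_isSignedInvolution q.2⟩
  left_inv p := by
    obtain ⟨⟨σ, s⟩, h⟩ := p
    refine Subtype.ext (Prod.ext (Equiv.ext fun x => ?_) (funext fun x => ?_))
    · simp [foldedPerm, h.apply_eq x]
    · obtain ⟨b, _ | _⟩ := x
      · rfl
      · exact (h.sign_true b).symm
  right_inv q := by
    obtain ⟨⟨τ, f⟩, h⟩ := q
    refine Subtype.ext (Prod.ext (Equiv.ext fun b => ?_) rfl)
    by_cases hb : f b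
    · simp [foldedPerm, hb]
    · simpa [foldedPerm, hb] using (not_imp_comm.1 (h.2 b) hb).symm

end IsFoldedLargestSectClan

lemma card_fixed_sign_true_eq_false {γ : Type} [Fintype γ] [DecidableEq γ] {r : γ → γ}
    (hr : Involutive r) {σ : Perm γ} {s : γ → Bool} (hcomm : ∀ i, σ (r i) = r (σ i))
    (hflip : ∀ i, σ i = i → s (r i) = !s i) :
    (Finset.univ.filter fun i => σ i = i ∧ s i = true).card =
      (Finset.univ.filter fun i => σ i = i ∧ s i = false).card := by
  refine Finset.card_nbij' r r (fun i hi => ?_) (fun i hi => ?_) (fun i _ => hr i)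
    (fun i _ => hr i) <;>
  · simp only [Finset.coe_filter, Finset.mem_univ, true_and, Set.mem_ofPred_eq] at hi ⊢
    exact ⟨by rw [hcomm, hi.1], by rw [hflip i hi.1, hi.2]; rfl⟩

lemma isLargestSectClan_iff {n : ℕ} {σ : Perm (Fin (2 * n))} {s : Fin (2 * n) → Bool} :
    IsLargestSectClan n σ s ↔
      Involutive σ ∧ (∀ i, σ i ≠ i → s i = true) ∧ (∀ i, σ i.rev = (σ i).rev) ∧
      (∀ i, σ i = i → s i.rev = !s i) ∧ (∀ i, σ i = i → (s i = false ↔ i.val < n)) ∧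
      (∀ i, σ i ≠ i → (i.val < n ↔ ¬(σ i).val < n)) :=
  ⟨fun ⟨⟨hinv, hnorm, _, hrev, hflip⟩, hsect, hcross⟩ =>
    ⟨hinv, hnorm, hrev, hflip, hsect, hcross⟩, fun ⟨hinv, hnorm, hrev, hflip, hsect, hcross⟩ =>
    ⟨⟨hinv, hnorm, card_fixed_sign_true_eq_false Fin.rev_rev hrev hflip, hrev, hflip⟩, hsect,
      hcross⟩⟩

def foldFin (n : ℕ) : Fin n × Bool → Fin (2 * n)
  | (b, false) => Fin.castLE (by omega) b
  | (b, true) => (Fin.castLE (by omega) b).rev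

lemma foldFin_val_lt_iff {n : ℕ} (x : Fin n × Bool) : (foldFin n x).val < n ↔ x.2 = false := by
  obtain ⟨b, _ | _⟩ := x
  · simp [foldFin]
  · simp [foldFin]
    omega

lemma rev_foldFin {n : ℕ} (x : Fin n × Bool) : (foldFin n x).rev = foldFin n (x.1, !x.2) := by
  obtain ⟨b, _ | _⟩ := x <;> simp [foldFin]

lemma foldFin_injective (n : ℕ) : Injective (foldFin n) := by
  rintro ⟨a, _ | _⟩ ⟨b, _ | _⟩ h <;> simp [foldFin, Fin.ext_iff] at h ⊢ <;> omega

noncomputable def foldFinEquiv (n : ℕ) : Fin n × Bool ≃ Fin (2 * n) :=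
  Equiv.ofBijective (foldFin n) <| (Fintype.bijective_iff_injective_and_card _).2
    ⟨foldFin_injective n, by simp [mul_comm]⟩

lemma isLargestSectClan_permCongr_iff {n : ℕ} (σ : Perm (Fin n × Bool))
    (s : Fin n × Bool → Bool) :
    IsLargestSectClan n ((foldFinEquiv n).permCongr σ) (s ∘ (foldFinEquiv n).symm) ↔
      IsFoldedLargestSectClan σ s := by
  set e := foldFinEquiv n
  have hval (x : Fin n × Bool) : (e x).val < n ↔ x.2 = false := foldFin_val_lt_iff x
  have hrev (x : Fin n × Bool) : (e x).rev = e (x.1, !x.2) := rev_foldFin x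
  simp only [isLargestSectClan_iff, IsFoldedLargestSectClan, Involutive,
    e.symm.forall_congr_left, e.symm_symm, permCongr_apply, comp_apply, e.symm_apply_apply,
    hrev, hval, ne_eq, e.apply_eq_iff_eq]

lemma epsnum_eq_card_signedInvolution (n : ℕ) :
    epsnum n = Nat.card (SignedInvolution (Fin n)) :=
  Nat.card_congr <|
    (((foldFinEquiv n).permCongr.prodCongr
      ((foldFinEquiv n).arrowCongr (Equiv.refl Bool))).subtypeEquiv
        fun p => (isLargestSectClan_permCongr_iff p.1 p.2).symm).symm.trans
    IsFoldedLargestSectClan.equivSignedInvolution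

/-- `ε_0 = 1`, `ε_1 = 2`, and `ε_n = 2·ε_{n−1} + (n−1)·ε_{n−2}` for `n ≥ 2`. -/
theorem stmt14 :
    epsnum 0 = 1 ∧ epsnum 1 = 2 ∧
    ∀ n : ℕ, 2 ≤ n → epsnum n = 2 * epsnum (n - 1) + (n - 1) * epsnum (n - 2) := by
  simp only [epsnum_eq_card_signedInvolution]
  refine ⟨SignedInvolution.card_of_isEmpty, SignedInvolution.card_fin_one, fun n hn => ?_⟩
  obtain ⟨m, rfl⟩ : ∃ m, n = m + 2 := ⟨n - 2, by omega⟩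
  exact SignedInvolution.card_fin_succ_succ m
end

section
/- The bijection γ ↦ π^γ from the set ℰ_n of skew-symmetric (n,n)-clans in the largest sect to the set 𝒫_n of partial involutions on n letters is an order isomorphism from (ℰ_n, ≤_C) to (𝒫_n, ⪯): for γ, τ ∈ ℰ_n one has γ ≤_C τ if and only if π^γ ⪯ π^τ. -/
/-- A *partial involution* on `n` letters: a symmetric `n × n` partial permutation
matrix (entries in `{0,1}`, at most one nonzero entry in each row and each column),
viewed over `ℚ`. -/
def IsPartialInvolution (n : ℕ) (M : Matrix (Fin n) (Fin n) ℚ) : Prop :=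
  (∀ i j, M i j = 0 ∨ M i j = 1) ∧
  (∀ i j j', M i j = 1 → M i j' = 1 → j = j') ∧
  (∀ i i' j, M i j = 1 → M i' j = 1 → i = i') ∧
  M.IsSymm

/-- `P_n`, the number of partial involutions on `n` letters. -/
noncomputable def Pnum (n : ℕ) : ℕ :=
  Nat.card {M : Matrix (Fin n) (Fin n) ℚ // IsPartialInvolution n M}

/-- The matrix `π^γ` associated to a clan `γ = (σ, s)` of the largest sect: the
`(i,j)`-entry (with `i, j` among the first `n` positions) is `1` exactly when positions
`i` and `2n+1−j` carry matching natural numbers, i.e. when `σ` sends position `i` to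
position `2n+1−j` (0-indexed: `σ ⟨i⟩ = ⟨2n−1−j⟩`); all other entries are `0`. -/
def clanMatrix (n : ℕ) (σ : Equiv.Perm (Fin (2 * n))) : Matrix (Fin n) (Fin n) ℚ :=
  fun i j =>
    if σ ⟨i.val, by have := i.isLt; omega⟩ = ⟨2 * n - 1 - j.val, by have := j.isLt; omega⟩
    then 1 else 0

/-- `γ(i;+)` for a clan `γ = (σ, s)` and a 1-indexed position `i`: the number of `+`
signs among the first `i` symbols plus the number of pairs of matching natural numbers
both of whose positions are `≤ i` (positions are 0-indexed internally, hence `t.val < i`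
means "1-indexed position `t+1 ≤ i`"). -/
def clanPlus (n : ℕ) (σ : Equiv.Perm (Fin (2 * n))) (s : Fin (2 * n) → Bool) (i : ℕ) : ℕ :=
  (Finset.univ.filter (fun t : Fin (2 * n) => t.val < i ∧ σ t = t ∧ s t = true)).card +
  (Finset.univ.filter (fun t : Fin (2 * n) => t < σ t ∧ (σ t).val < i)).card

/-- `γ(i;−)`: as `clanPlus`, with `−` signs in place of `+` signs. -/
def clanMinus (n : ℕ) (σ : Equiv.Perm (Fin (2 * n))) (s : Fin (2 * n) → Bool) (i : ℕ) : ℕ :=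
  (Finset.univ.filter (fun t : Fin (2 * n) => t.val < i ∧ σ t = t ∧ s t = false)).card +
  (Finset.univ.filter (fun t : Fin (2 * n) => t < σ t ∧ (σ t).val < i)).card

/-- `γ(i;j)` for 1-indexed positions `i < j`: the number of pairs of matching natural
numbers at (1-indexed) positions `(a,b)`, `a < b`, with `a ≤ i < j < b`. -/
def clanPair (n : ℕ) (σ : Equiv.Perm (Fin (2 * n))) (i j : ℕ) : ℕ :=
  (Finset.univ.filter
    (fun t : Fin (2 * n) => t < σ t ∧ t.val + 1 ≤ i ∧ j ≤ (σ t).val)).card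

/-- The conjectural `CI` Bruhat order on clans: `γ ≤_C τ` iff `γ(i;+) ≥ τ(i;+)` and
`γ(i;−) ≥ τ(i;−)` for all `1 ≤ i ≤ 2n`, and `γ(i;j) ≤ τ(i;j)` for all `1 ≤ i < j ≤ 2n`. -/
def BruhatCLE (n : ℕ) (γ τ : Equiv.Perm (Fin (2 * n)) × (Fin (2 * n) → Bool)) : Prop :=
  (∀ i : ℕ, 1 ≤ i → i ≤ 2 * n →
    clanPlus n τ.1 τ.2 i ≤ clanPlus n γ.1 γ.2 i ∧
    clanMinus n τ.1 τ.2 i ≤ clanMinus n γ.1 γ.2 i) ∧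
  (∀ i j : ℕ, 1 ≤ i → i < j → j ≤ 2 * n → clanPair n γ.1 i j ≤ clanPair n τ.1 i j)

/-- The rank-control order `⪯` on `n × n` matrices over `ℚ`: `M ⪯ N` iff for all
`1 ≤ k, l ≤ n` the upper-left `k × l` submatrix of `M` has rank at most that of `N`. -/
def RankControlLE (n : ℕ) (M N : Matrix (Fin n) (Fin n) ℚ) : Prop :=
  ∀ (k l : ℕ) (_ : 1 ≤ k) (hk : k ≤ n) (_ : 1 ≤ l) (hl : l ≤ n),
    (M.submatrix (Fin.castLE hk) (Fin.castLE hl)).rank ≤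
      (N.submatrix (Fin.castLE hk) (Fin.castLE hl)).rank

/-!
In the largest sect every pair of matching numbers straddles the middle of the clan and the
signs are forced (`−` on the first half, `+` on the second), so a clan is determined by its
matching restricted to the first half, which is exactly the partial involution `π^γ`.
For the same reason `γ(i;+) = i − n` does not depend on `γ`, `γ(i;−)` is determined by
`γ(min(i,n); max(i,n))`, and `γ(i;j) = γ(min(i,n); max(j,n))`; so `γ ≤_C τ` reduces to
`γ(k; 2n−l) ≤ τ(k; 2n−l)` for `1 ≤ k, l ≤ n`. Finally the upper-left `k × l` block of `π^γ` is
a `0/1` matrix with at most one `1` per column, so its rank is its number of nonzero rows, which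
is `γ(k; 2n−l)`.
-/

open Finset

theorem Matrix.rank_of_ite_eq_ncard {m k K : Type*} [Fintype m] [Fintype k] [Field K]
    (r : m → k → Prop) [∀ i j, Decidable (r i j)] (hr : ∀ i i' j, r i j → r i' j → i = i') :
    (Matrix.of fun i j => if r i j then (1 : K) else 0).rank = {i | ∃ j, r i j}.ncard := by
  classical
  set A : Matrix m k K := Matrix.of fun i j => if r i j then 1 else 0
  have hcol : ∀ i j, r i j → A.col j = Pi.basisFun K m i := by
    intro i j hij
    ext i'
    by_cases hi' : i' = i
    · simp [A, hi', hij]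
    · have : ¬ r i' j := fun h => hi' (hr i' i j h hij)
      simp [A, hi', this]
  have hspan : Submodule.span K (Set.range A.col) = Pi.spanSubset K {i | ∃ j, r i j} := by
    refine le_antisymm (Submodule.span_le.2 ?_) (Submodule.span_le.2 ?_)
    · rintro _ ⟨j, rfl⟩
      by_cases hj : ∃ i, r i j
      · obtain ⟨i, hij⟩ := hj
        rw [hcol i j hij]
        exact Submodule.subset_span ⟨i, ⟨j, hij⟩, rfl⟩
      · rw [not_exists] at hj
        have : A.col j = 0 := by
          ext i
          simp [A, hj]
        rw [SetLike.mem_coe, this]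
        exact zero_mem _
    · rintro _ ⟨i, ⟨j, hij⟩, rfl⟩
      rw [← hcol i j hij]
      exact Submodule.subset_span ⟨j, rfl⟩
  rw [Matrix.rank_eq_finrank_span_cols, hspan, Pi.dim_spanSubset]

theorem Finset.card_filter_lt_apply {α : Type*} [Fintype α] [LT α] [DecidableLT α] {σ : α → α}
    (hσ : Function.Involutive σ) (p : α → Prop) [DecidablePred p] :
    #{t | t < σ t ∧ p (σ t)} = #{u | σ u < u ∧ p u} :=
  card_bijective σ hσ.bijective fun t => by simp [hσ t]

section InvolutionOfRel

variable {α : Type*} {r : α → α → Prop}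

open Classical in
noncomputable def involutionOfRel (r : α → α → Prop) (x : α) : α :=
  if h : ∃ y, r x y then h.choose else x

theorem involutionOfRel_eq_of_rel (hr : ∀ x y z, r x y → r x z → y = z) {x y : α}
    (hxy : r x y) : involutionOfRel r x = y := by
  have h : ∃ y, r x y := ⟨y, hxy⟩
  rw [involutionOfRel, dif_pos h]
  exact hr x _ _ h.choose_spec hxy

theorem involutionOfRel_eq_self {x : α} (hx : ∀ y, ¬ r x y) : involutionOfRel r x = x := by
  rw [involutionOfRel, dif_neg (not_exists.2 hx)]

theorem involutionOfRel_eq_iff (hr : ∀ x y z, r x y → r x z → y = z) {x y : α} (hxy : x ≠ y) :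
    involutionOfRel r x = y ↔ r x y := by
  refine ⟨fun h => ?_, involutionOfRel_eq_of_rel hr⟩
  by_cases hx : ∃ z, r x z
  · obtain ⟨z, hz⟩ := hx
    rwa [← h, involutionOfRel_eq_of_rel hr hz]
  · rw [involutionOfRel_eq_self (not_exists.1 hx)] at h
    exact absurd h hxy

theorem involutive_involutionOfRel (hr : ∀ x y z, r x y → r x z → y = z)
    (hsymm : ∀ x y, r x y → r y x) : Function.Involutive (involutionOfRel r) := by
  intro x
  by_cases hx : ∃ y, r x y
  · obtain ⟨y, hy⟩ := hx
    rw [involutionOfRel_eq_of_rel hr hy, involutionOfRel_eq_of_rel hr (hsymm x y hy)]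
  · rw [involutionOfRel_eq_self (not_exists.1 hx), involutionOfRel_eq_self (not_exists.1 hx)]

theorem involutionOfRel_comm (hr : ∀ x y z, r x y → r x z → y = z) {g : α → α}
    (hg : Function.Involutive g) (hrg : ∀ x y, r (g x) (g y) ↔ r x y) (x : α) :
    involutionOfRel r (g x) = g (involutionOfRel r x) := by
  by_cases hx : ∃ y, r x y
  · obtain ⟨y, hy⟩ := hx
    rw [involutionOfRel_eq_of_rel hr hy, involutionOfRel_eq_of_rel hr ((hrg x y).2 hy)]
  · rw [not_exists] at hx
    rw [involutionOfRel_eq_self hx, involutionOfRel_eq_self fun z hz => hx (g z) ?_]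
    rwa [← hrg, hg]

end InvolutionOfRel

def lowPos (n : ℕ) (i : Fin n) : Fin (2 * n) := ⟨i, by omega⟩

@[simp] theorem val_lowPos {n : ℕ} (i : Fin n) : (lowPos n i).val = i.val := rfl

theorem lowPos_injective (n : ℕ) : Function.Injective (lowPos n) := fun _ _ h =>
  Fin.ext (congrArg Fin.val h :)

theorem lowPos_ne_rev_lowPos {n : ℕ} (i j : Fin n) : lowPos n i ≠ Fin.rev (lowPos n j) := by
  simp only [ne_eq, Fin.ext_iff, val_lowPos, Fin.val_rev]
  omega

theorem exists_lowPos_eq {n : ℕ} {x : Fin (2 * n)} (hx : x.val < n) : ∃ i, lowPos n i = x :=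
  ⟨⟨x, hx⟩, rfl⟩

theorem exists_rev_lowPos_eq {n : ℕ} {x : Fin (2 * n)} (hx : n ≤ x.val) :
    ∃ j, Fin.rev (lowPos n j) = x :=
  ⟨⟨2 * n - 1 - x, by omega⟩, by ext; simp only [Fin.val_rev, val_lowPos]; omega⟩

theorem clanMatrix_eq (n : ℕ) (σ : Equiv.Perm (Fin (2 * n))) :
    clanMatrix n σ =
      Matrix.of fun i j => if σ (lowPos n i) = Fin.rev (lowPos n j) then 1 else 0 := by
  ext i j
  have : (⟨2 * n - 1 - j.val, by omega⟩ : Fin (2 * n)) = Fin.rev (lowPos n j) := by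
    ext; simp only [Fin.val_rev, val_lowPos]; omega
  simp only [clanMatrix, this]
  rfl

section ClanMatrix

variable {n : ℕ} {σ : Equiv.Perm (Fin (2 * n))}

theorem clanMatrix_eq_one_iff {i j : Fin n} :
    clanMatrix n σ i j = 1 ↔ σ (lowPos n i) = Fin.rev (lowPos n j) := by
  rw [clanMatrix_eq, Matrix.of_apply]
  split_ifs with h <;> simp [h]

theorem clanMatrix_eq_zero_or_one (i j : Fin n) :
    clanMatrix n σ i j = 0 ∨ clanMatrix n σ i j = 1 := by
  rw [clanMatrix_eq, Matrix.of_apply]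
  split_ifs <;> simp

theorem apply_eq_rev_comm (hσ : Function.Involutive σ)
    (hskew : ∀ i, σ (Fin.rev i) = Fin.rev (σ i)) {x y : Fin (2 * n)} (h : σ x = Fin.rev y) :
    σ y = Fin.rev x := by
  rw [← Fin.rev_rev y, hskew, ← h, hσ]

theorem isPartialInvolution_clanMatrix (hσ : Function.Involutive σ)
    (hskew : ∀ i, σ (Fin.rev i) = Fin.rev (σ i)) : IsPartialInvolution n (clanMatrix n σ) := by
  refine ⟨clanMatrix_eq_zero_or_one, fun i j j' h h' => ?_, fun i i' j h h' => ?_, ?_⟩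
  · rw [clanMatrix_eq_one_iff] at h h'
    exact lowPos_injective n (Fin.rev_injective (h.symm.trans h'))
  · rw [clanMatrix_eq_one_iff] at h h'
    exact lowPos_injective n (σ.injective (h.trans h'.symm))
  · ext i j
    rw [Matrix.transpose_apply, clanMatrix_eq, Matrix.of_apply, Matrix.of_apply]
    exact if_congr ⟨apply_eq_rev_comm hσ hskew, apply_eq_rev_comm hσ hskew⟩ rfl rfl

theorem rank_submatrix_clanMatrix {k l : ℕ} (hk : k ≤ n) (hl : l ≤ n) :
    ((clanMatrix n σ).submatrix (Fin.castLE hk) (Fin.castLE hl)).rank =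
      clanPair n σ k (2 * n - l) := by
  have hblock : (clanMatrix n σ).submatrix (Fin.castLE hk) (Fin.castLE hl) = Matrix.of fun i j =>
      if σ (lowPos n (Fin.castLE hk i)) = Fin.rev (lowPos n (Fin.castLE hl j)) then 1 else 0 := by
    rw [clanMatrix_eq]
    rfl
  rw [hblock, Matrix.rank_of_ite_eq_ncard]
  · rw [clanPair, ← Set.ncard_coe_finset]
    refine Set.ncard_congr (fun i _ => lowPos n (Fin.castLE hk i)) ?_ ?_ ?_
    · rintro i ⟨j, hij⟩
      have := congrArg Fin.val hij
      simp only [Fin.val_rev, val_lowPos, Fin.val_castLE] at this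
      simp only [coe_filter, mem_univ, true_and, Set.mem_ofPred_eq, Fin.lt_def, val_lowPos,
        Fin.val_castLE]
      omega
    · intro i i' _ _ hii'
      simpa [Fin.ext_iff] using hii'
    · intro t ht
      simp only [coe_filter, mem_univ, true_and, Set.mem_ofPred_eq] at ht
      refine ⟨⟨t, by omega⟩, ⟨⟨2 * n - 1 - σ t, by omega⟩, ?_⟩, rfl⟩
      show σ t = _
      ext
      simp only [Fin.val_rev, val_lowPos, Fin.val_castLE]
      omega
  · intro i i' j hi hi'
    simpa [Fin.ext_iff] using σ.injective (hi.trans hi'.symm)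

end ClanMatrix

theorem clanPair_eq_zero_of_le {n : ℕ} (σ : Equiv.Perm (Fin (2 * n))) {i j : ℕ}
    (hj : 2 * n ≤ j) : clanPair n σ i j = 0 := by
  simp only [clanPair, card_eq_zero, filter_eq_empty_iff]
  omega

def sectSign (n : ℕ) (σ : Equiv.Perm (Fin (2 * n))) (i : Fin (2 * n)) : Bool :=
  !decide (σ i = i ∧ i.val < n)

namespace IsLargestSectClan

variable {n : ℕ} {σ : Equiv.Perm (Fin (2 * n))} {s : Fin (2 * n) → Bool}

theorem trichotomy (h : IsLargestSectClan n σ s) (t : Fin (2 * n)) :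
    (σ t = t ∧ s t = decide (n ≤ t.val)) ∨ (t.val < n ∧ n ≤ (σ t).val) ∨
      (n ≤ t.val ∧ (σ t).val < n) := by
  by_cases ht : σ t = t
  · refine .inl ⟨ht, ?_⟩
    have := h.2.1 t ht
    cases hst : s t <;> simp [hst] at this ⊢ <;> omega
  · have := h.2.2 t ht
    omega

theorem sign_eq (h : IsLargestSectClan n σ s) : s = sectSign n σ := by
  funext t
  by_cases ht : σ t = t
  · have := h.2.1 t ht
    cases hs : s t <;> simp_all [sectSign]
  · simp [sectSign, ht, h.1.2.1 t ht]

theorem clanPlus_eq (h : IsLargestSectClan n σ s) {i : ℕ} (hi : i ≤ 2 * n) :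
    clanPlus n σ s i = i - n := by
  have key : clanPlus n σ s i + #{t : Fin (2 * n) | t.val < min i n} =
      #{t : Fin (2 * n) | t.val < i} := by
    -- counting each pair at its right end makes the identity hold position by position
    rw [clanPlus, card_filter_lt_apply h.1.1 (fun u : Fin (2 * n) => u.val < i)]
    simp only [card_filter, ← sum_add_distrib]
    refine sum_congr rfl fun t _ => ?_
    rcases h.trichotomy t with ⟨hfix, hs⟩ | ⟨h1, h2⟩ | ⟨h1, h2⟩
    · simp only [hfix, hs, lt_self_iff_false, decide_eq_true_eq, true_and, false_and, if_false]
      split_ifs <;> omega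
    all_goals
      have : σ t ≠ t := by omega
      simp only [this, false_and, and_false, if_false]
      split_ifs <;> omega
  rw [Fin.card_filter_val_lt, Fin.card_filter_val_lt] at key
  omega

theorem clanMinus_add_clanPair (h : IsLargestSectClan n σ s) (i : ℕ) :
    clanMinus n σ s i + clanPair n σ (min i n) (max i n) = min i n := by
  have key : clanMinus n σ s i + clanPair n σ (min i n) (max i n) =
      #{t : Fin (2 * n) | t.val < min i n} := by
    simp only [clanMinus, clanPair, card_filter, ← sum_add_distrib]
    refine sum_congr rfl fun t _ => ?_
    rcases h.trichotomy t with ⟨hfix, hs⟩ | ⟨h1, h2⟩ | ⟨h1, h2⟩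
    · simp only [hfix, hs, lt_self_iff_false, decide_eq_false_iff_not, true_and, false_and,
        if_false]
      split_ifs <;> omega
    all_goals
      have : σ t ≠ t := by omega
      simp only [this, false_and, and_false, if_false]
      split_ifs <;> omega
  rw [key, Fin.card_filter_val_lt]
  omega

theorem clanPair_eq_min_max (h : IsLargestSectClan n σ s) (i j : ℕ) :
    clanPair n σ i j = clanPair n σ (min i n) (max j n) := by
  simp only [clanPair]
  congr 1
  refine filter_congr fun t _ => ?_
  rcases h.trichotomy t with ⟨hfix, -⟩ | ⟨h1, h2⟩ | ⟨h1, h2⟩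
  · simp [hfix]
  all_goals omega

end IsLargestSectClan

theorem IsLargestSectClan.bruhatCLE_iff {n : ℕ}
    {γ τ : Equiv.Perm (Fin (2 * n)) × (Fin (2 * n) → Bool)}
    (hγ : IsLargestSectClan n γ.1 γ.2) (hτ : IsLargestSectClan n τ.1 τ.2) :
    BruhatCLE n γ τ ↔ ∀ k l : ℕ, 1 ≤ k → k ≤ n → 1 ≤ l → l ≤ n →
      clanPair n γ.1 k (2 * n - l) ≤ clanPair n τ.1 k (2 * n - l) := by
  constructor
  · rintro ⟨hsign, hpair⟩ k l hk1 hkn hl1 hln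
    rcases lt_or_ge k (2 * n - l) with hkl | hkl
    · exact hpair k (2 * n - l) hk1 hkl (by omega)
    · have hγn := hγ.clanMinus_add_clanPair n
      have hτn := hτ.clanMinus_add_clanPair n
      have hminus := (hsign n (by omega) (by omega)).2
      rw [min_self, max_self] at hγn hτn
      rw [show k = n by omega, show 2 * n - l = n by omega]
      omega
  · intro hle
    have hle' : ∀ k j, 1 ≤ k → k ≤ n → n ≤ j → clanPair n γ.1 k j ≤ clanPair n τ.1 k j := by
      intro k j hk1 hkn hj
      rcases lt_or_ge j (2 * n) with hj2 | hj2
      · simpa [show 2 * n - (2 * n - j) = j by omega] using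
          hle k (2 * n - j) hk1 hkn (by omega) (by omega)
      · rw [clanPair_eq_zero_of_le _ hj2]
        exact Nat.zero_le _
    refine ⟨fun i hi1 hi2 => ⟨?_, ?_⟩, fun i j hi1 hij hj2 => ?_⟩
    · rw [hγ.clanPlus_eq hi2, hτ.clanPlus_eq hi2]
    · have := hle' (min i n) (max i n) (by omega) (min_le_right _ _) (le_max_right _ _)
      have := hγ.clanMinus_add_clanPair i
      have := hτ.clanMinus_add_clanPair i
      omega
    · rw [hγ.clanPair_eq_min_max, hτ.clanPair_eq_min_max]
      exact hle' _ _ (by omega) (min_le_right _ _) (le_max_right _ _)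

def partialInvolutionRel (n : ℕ) (M : Matrix (Fin n) (Fin n) ℚ) (x y : Fin (2 * n)) : Prop :=
  ∃ i j, M i j = 1 ∧ (x = lowPos n i ∧ y = Fin.rev (lowPos n j) ∨
    x = Fin.rev (lowPos n j) ∧ y = lowPos n i)

section PartialInvolutionRel

variable {n : ℕ} {M : Matrix (Fin n) (Fin n) ℚ}

theorem partialInvolutionRel_symm {x y : Fin (2 * n)} :
    partialInvolutionRel n M x y → partialInvolutionRel n M y x := by
  rintro ⟨i, j, hij, h | h⟩
  exacts [⟨i, j, hij, .inr h.symm⟩, ⟨i, j, hij, .inl h.symm⟩]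

theorem partialInvolutionRel_lowPos_rev_iff {i j : Fin n} :
    partialInvolutionRel n M (lowPos n i) (Fin.rev (lowPos n j)) ↔ M i j = 1 := by
  refine ⟨?_, fun h => ⟨i, j, h, .inl ⟨rfl, rfl⟩⟩⟩
  rintro ⟨i', j', h, ⟨hi, hj⟩ | ⟨hi, -⟩⟩
  · rwa [lowPos_injective n hi, lowPos_injective n (Fin.rev_injective hj)]
  · exact absurd hi (lowPos_ne_rev_lowPos i j')

theorem partialInvolutionRel_cross {x y : Fin (2 * n)} (h : partialInvolutionRel n M x y) :
    x.val < n ↔ ¬ y.val < n := by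
  rcases h with ⟨i, j, -, ⟨rfl, rfl⟩ | ⟨rfl, rfl⟩⟩ <;> simp only [Fin.val_rev, val_lowPos] <;>
    omega

theorem IsPartialInvolution.partialInvolutionRel_unique (hM : IsPartialInvolution n M)
    (x y z : Fin (2 * n)) :
    partialInvolutionRel n M x y → partialInvolutionRel n M x z → y = z := by
  obtain ⟨-, hrow, hcol, -⟩ := hM
  rintro ⟨i, j, hij, ⟨rfl, rfl⟩ | ⟨rfl, rfl⟩⟩ ⟨i', j', hij', ⟨hx, rfl⟩ | ⟨hx, rfl⟩⟩
  · cases lowPos_injective n hx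
    rw [hrow i j j' hij hij']
  · exact absurd hx (lowPos_ne_rev_lowPos i j')
  · exact absurd hx.symm (lowPos_ne_rev_lowPos i' j)
  · cases lowPos_injective n (Fin.rev_injective hx)
    rw [hcol i i' j hij hij']

theorem IsPartialInvolution.partialInvolutionRel_rev (hM : IsPartialInvolution n M)
    (x y : Fin (2 * n)) :
    partialInvolutionRel n M (Fin.rev x) (Fin.rev y) ↔ partialInvolutionRel n M x y := by
  have hsymm : ∀ i j, M i j = 1 → M j i = 1 := fun i j h => (hM.2.2.2.apply i j).trans h
  have key : ∀ x y, partialInvolutionRel n M x y →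
      partialInvolutionRel n M (Fin.rev x) (Fin.rev y) := by
    rintro _ _ ⟨i, j, hij, ⟨rfl, rfl⟩ | ⟨rfl, rfl⟩⟩
    · exact ⟨j, i, hsymm i j hij, .inr ⟨rfl, Fin.rev_rev _⟩⟩
    · exact ⟨j, i, hsymm i j hij, .inl ⟨Fin.rev_rev _, rfl⟩⟩
  exact ⟨fun h => by simpa only [Fin.rev_rev] using key _ _ h, key x y⟩

end PartialInvolutionRel

theorem isLargestSectClan_sectSign {n : ℕ} {σ : Equiv.Perm (Fin (2 * n))}
    (hσ : Function.Involutive σ) (hskew : ∀ i, σ (Fin.rev i) = Fin.rev (σ i))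
    (hcross : ∀ i, σ i ≠ i → (i.val < n ↔ ¬ (σ i).val < n)) :
    IsLargestSectClan n σ (sectSign n σ) := by
  have hfix : ∀ i, σ (Fin.rev i) = Fin.rev i ↔ σ i = i := fun i => by
    rw [hskew, Fin.rev_inj]
  refine ⟨⟨hσ, fun i hi => by simp [sectSign, hi], ?_, hskew, fun i hi => ?_⟩,
    fun i hi => by simp [sectSign, hi], hcross⟩
  · refine card_bijective Fin.rev Fin.rev_bijective fun i => ?_
    rw [mem_filter, mem_filter, hfix]
    by_cases hi : σ i = i
    · simp [sectSign, hi, hfix]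
      omega
    · simp [hi]
  · by_cases hn : i.val < n <;> simp [sectSign, hfix, hi, hn] <;> omega

theorem IsLargestSectClan.partialInvolutionRel_iff {n : ℕ} {σ : Equiv.Perm (Fin (2 * n))}
    {s : Fin (2 * n) → Bool} (h : IsLargestSectClan n σ s) {x y : Fin (2 * n)} (hxy : x ≠ y) :
    partialInvolutionRel n (clanMatrix n σ) x y ↔ σ x = y := by
  constructor
  · rintro ⟨i, j, hij, ⟨rfl, rfl⟩ | ⟨rfl, rfl⟩⟩ <;> rw [clanMatrix_eq_one_iff] at hij
    · exact hij
    · rw [← hij, h.1.1]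
  · rintro rfl
    have hcross := h.2.2 x (Ne.symm hxy)
    by_cases hx : x.val < n
    · obtain ⟨i, rfl⟩ := exists_lowPos_eq hx
      obtain ⟨j, hj⟩ := exists_rev_lowPos_eq (not_lt.1 (hcross.1 hx))
      exact ⟨i, j, clanMatrix_eq_one_iff.2 hj.symm, .inl ⟨rfl, hj.symm⟩⟩
    · obtain ⟨i, hi⟩ := exists_lowPos_eq (not_not.1 (mt hcross.2 hx))
      obtain ⟨j, rfl⟩ := exists_rev_lowPos_eq (not_lt.1 hx)
      refine ⟨i, j, clanMatrix_eq_one_iff.2 ?_, .inr ⟨rfl, hi.symm⟩⟩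
      rw [hi, h.1.1]

theorem IsLargestSectClan.eq_involutionOfRel {n : ℕ} {σ : Equiv.Perm (Fin (2 * n))}
    {s : Fin (2 * n) → Bool} (h : IsLargestSectClan n σ s) :
    ⇑σ = involutionOfRel (partialInvolutionRel n (clanMatrix n σ)) := by
  have hr := (isPartialInvolution_clanMatrix h.1.1 h.1.2.2.2.1).partialInvolutionRel_unique
  funext x
  by_cases hx : σ x = x
  · rw [hx, involutionOfRel_eq_self fun y hy => ?_]
    have hxy : x ≠ y := by
      rintro rfl
      exact iff_not_self (partialInvolutionRel_cross hy)
    exact hxy (hx.symm.trans ((h.partialInvolutionRel_iff hxy).1 hy))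
  · symm
    rw [involutionOfRel_eq_iff hr (Ne.symm hx), h.partialInvolutionRel_iff (Ne.symm hx)]

theorem IsPartialInvolution.exists_isLargestSectClan {n : ℕ} {M : Matrix (Fin n) (Fin n) ℚ}
    (hM : IsPartialInvolution n M) :
    ∃ σ : Equiv.Perm (Fin (2 * n)),
      IsLargestSectClan n σ (sectSign n σ) ∧ clanMatrix n σ = M := by
  have hr := hM.partialInvolutionRel_unique
  have hσ := involutive_involutionOfRel hr fun _ _ => partialInvolutionRel_symm
  set σ := Function.Involutive.toPerm _ hσ
  have hrel : ∀ x, σ x ≠ x → partialInvolutionRel n M x (σ x) := fun x hx =>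
    (involutionOfRel_eq_iff hr (Ne.symm hx)).1 rfl
  refine ⟨σ, isLargestSectClan_sectSign hσ
    (involutionOfRel_comm hr Fin.rev_involutive hM.partialInvolutionRel_rev)
    fun x hx => partialInvolutionRel_cross (hrel x hx), ?_⟩
  ext i j
  have hone : clanMatrix n σ i j = 1 ↔ M i j = 1 := by
    rw [clanMatrix_eq_one_iff, ← partialInvolutionRel_lowPos_rev_iff]
    exact involutionOfRel_eq_iff hr (lowPos_ne_rev_lowPos i j)
  rcases clanMatrix_eq_zero_or_one i j (σ := σ) with h | h <;>
    rcases hM.1 i j with h' | h' <;> simp_all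

/-- the bijection `γ ↦ π^γ` from the largest sect `ℰ_n` onto the partial
involutions `𝒫_n` is an order isomorphism from `(ℰ_n, ≤_C)` to `(𝒫_n, ⪯)`: for clans
`γ, τ` of the largest sect, `γ ≤_C τ` iff `π^γ ⪯ π^τ`. -/
theorem stmt16 (n : ℕ) :
    Set.BijOn (fun p : Equiv.Perm (Fin (2 * n)) × (Fin (2 * n) → Bool) => clanMatrix n p.1)
      {p | IsLargestSectClan n p.1 p.2} {M | IsPartialInvolution n M} ∧
    ∀ γ τ : Equiv.Perm (Fin (2 * n)) × (Fin (2 * n) → Bool),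
      IsLargestSectClan n γ.1 γ.2 → IsLargestSectClan n τ.1 τ.2 →
      (BruhatCLE n γ τ ↔ RankControlLE n (clanMatrix n γ.1) (clanMatrix n τ.1)) := by
  refine ⟨⟨fun p hp => isPartialInvolution_clanMatrix hp.1.1 hp.1.2.2.2.1, ?_, ?_⟩, ?_⟩
  · rintro ⟨σ, s⟩ (hp : IsLargestSectClan n σ s) ⟨σ', s'⟩ (hq : IsLargestSectClan n σ' s')
      (hmat : clanMatrix n σ = clanMatrix n σ')
    have hσ : σ = σ' := DFunLike.coe_injective <| by
      rw [hp.eq_involutionOfRel, hq.eq_involutionOfRel, hmat]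
    rw [hp.sign_eq, hq.sign_eq, hσ]
  · intro M hM
    obtain ⟨σ, hσ, hmat⟩ := hM.exists_isLargestSectClan
    exact ⟨(σ, sectSign n σ), hσ, hmat⟩
  · intro γ τ hγ hτ
    rw [hγ.bruhatCLE_iff hτ]
    simp only [RankControlLE, rank_submatrix_clanMatrix]
end

section
/- Let γ be a skew-symmetric (n,n)-clan in the largest sect with associated partial involution matrix π^γ. Then for 1 ≤ i < j ≤ 2n: γ(i;j) = rank(π^γ_{i,n}) if i < j ≤ n; γ(i;j) = rank(π^γ_{i,2n−j}) if i ≤ n < j; and γ(i;j) = rank(π^γ_{n,2n−j}) if n < i < j. -/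
/-!
In the largest sect every pair of matching numbers straddles the middle, so `γ(i;j)` counts the
positions `t < min(i, n)` whose partner `σ t` is at least `max(j, n)`. On the other side,
`π^γ_{k,l}` is a `0/1` matrix whose rows are distinct unit vectors or zero (`σ` is injective),
so its rank is its number of nonzero rows: the number of `t < k` whose partner lies among the
last `l` positions. The three cases of the theorem are the three ways of choosing `k = min(i, n)`
and `l = 2n − max(j, n)`.
-/

open Finset
open scoped Matrix

theorem Matrix.rank_of_ite_eq_of_injective {m n α R : Type*} [Fintype m] [Fintype n]
    [DecidableEq α] [Field R] (g : m → α) (e : n → α) (hg : Function.Injective g)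
    (he : Function.Injective e) :
    (Matrix.of fun i j => if g i = e j then (1 : R) else 0).rank =
      #{i | g i ∈ Set.range e} := by
  classical
  set A : Matrix m n R := Matrix.of fun i j => if g i = e j then 1 else 0
  set w : m → R := fun i => if g i ∈ Set.range e then 1 else 0
  refine le_antisymm (A.rank_le_card_of_support_subset _ fun i hi => ?_) ?_
  · by_contra hS
    refine hi (funext fun j => if_neg fun hj => ?_)
    simp only [coe_filter, mem_univ, true_and] at hS
    exact hS ⟨j, hj.symm⟩
  -- Injectivity of `g` and `e` makes the rows of `A` distinct unit vectors or zero, so `A * Aᵀ`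
  -- is the diagonal indicator of the nonzero rows.
  have hAAt : A * Aᵀ = Matrix.diagonal w := by
    ext i i'
    rw [Matrix.mul_apply, Matrix.diagonal_apply]
    by_cases hi : g i ∈ Set.range e
    · obtain ⟨j₀, hj₀⟩ := hi
      rw [Fintype.sum_eq_single j₀ fun j hj => by
        have hne : g i ≠ e j := fun h => hj (he (hj₀.trans h)).symm
        simp [A, hne]]
      have hw : w i = 1 := if_pos ⟨j₀, hj₀⟩
      simp only [A, Matrix.transpose_apply, Matrix.of_apply, hj₀, if_true, one_mul, hg.eq_iff, hw]
      exact if_congr eq_comm rfl rfl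
    · have hi' : ∀ j, e j ≠ g i := fun j hj => hi ⟨j, hj⟩
      simp [A, w, hi', fun j => (hi' j).symm]
  calc #{i | g i ∈ Set.range e} = Fintype.card {i // w i ≠ 0} := by
        rw [Fintype.card_subtype]; congr 1; ext i; simp [w]
    _ = (A * Aᵀ).rank := by rw [hAAt, Matrix.rank_diagonal]
    _ ≤ A.rank := Matrix.rank_mul_le_left _ _

theorem Fin.card_filter_castLE {k N : ℕ} (h : k ≤ N) (p : Fin N → Prop) [DecidablePred p] :
    #{a : Fin k | p (Fin.castLE h a)} = #{t : Fin N | t.val < k ∧ p t} := by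
  rw [← card_map (Fin.castLEEmb h)]
  congr 1
  ext t
  simp only [mem_filter, mem_map, mem_univ, true_and, Fin.castLEEmb_apply]
  constructor
  · rintro ⟨a, ha, rfl⟩
    exact ⟨a.isLt, ha⟩
  · rintro ⟨ht, hp⟩
    exact ⟨⟨t, ht⟩, hp, rfl⟩

section
variable {n : ℕ} (σ : Equiv.Perm (Fin (2 * n)))

theorem rank_clanMatrix_submatrix {k l : ℕ} (hk : k ≤ n) (hl : l ≤ n) :
    ((clanMatrix n σ).submatrix (Fin.castLE hk) (Fin.castLE hl)).rank =
      #{t : Fin (2 * n) | t.val < k ∧ 2 * n - l ≤ (σ t).val} := by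
  have hk' : k ≤ 2 * n := by omega
  let e (b : Fin l) : Fin (2 * n) := ⟨2 * n - 1 - b, by omega⟩
  have he : Function.Injective e := fun b b' h => by
    ext; simp only [e, Fin.mk.injEq] at h; omega
  refine (Matrix.rank_of_ite_eq_of_injective (R := ℚ) (fun a : Fin k => σ (Fin.castLE hk' a)) e
    (σ.injective.comp (Fin.castLE_injective hk')) he).trans ?_
  refine (Fin.card_filter_castLE hk' (fun t => σ t ∈ Set.range e)).trans ?_
  refine congrArg card (filter_congr fun t _ => and_congr_right fun _ => ?_)
  have := (σ t).isLt
  constructor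
  · rintro ⟨b, hb⟩
    have := b.isLt
    rw [← hb]
    simp only [e]
    omega
  · intro ht
    exact ⟨⟨2 * n - 1 - σ t, by omega⟩, by ext; simp only [e]; omega⟩

theorem clanPair_eq_card_of_crossing
    (hcross : ∀ t : Fin (2 * n), σ t ≠ t → (t.val < n ↔ ¬ (σ t).val < n)) (i j : ℕ) :
    clanPair n σ i j = #{t : Fin (2 * n) | t.val < min i n ∧ max j n ≤ (σ t).val} := by
  refine congrArg card (filter_congr fun t _ => ?_)
  rw [Fin.lt_def]
  by_cases hfix : σ t = t
  · rw [hfix]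
    omega
  · have := hcross t hfix
    omega

theorem clanPair_eq_rank_clanMatrix_submatrix
    (hcross : ∀ t : Fin (2 * n), σ t ≠ t → (t.val < n ↔ ¬ (σ t).val < n))
    {i j k l : ℕ} (hk : k ≤ n) (hl : l ≤ n) (hik : min i n = k) (hjl : max j n + l = 2 * n) :
    clanPair n σ i j = ((clanMatrix n σ).submatrix (Fin.castLE hk) (Fin.castLE hl)).rank := by
  rw [clanPair_eq_card_of_crossing σ hcross, rank_clanMatrix_submatrix σ hk hl]
  exact congrArg card (filter_congr fun t _ => by omega)

end

/-- for a skew-symmetric `(n,n)`-clan `γ = (σ, s)` of the largest sect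
with associated partial involution matrix `π^γ`, and `1 ≤ i < j ≤ 2n`:
`γ(i;j) = rank(π^γ_{i,n})` if `i < j ≤ n`; `γ(i;j) = rank(π^γ_{i,2n−j})` if
`i ≤ n < j`; and `γ(i;j) = rank(π^γ_{n,2n−j})` if `n < i < j` (when `j = 2n` the
relevant submatrix has `0` columns and rank `0`). -/
theorem stmt18 (n : ℕ) (σ : Equiv.Perm (Fin (2 * n))) (s : Fin (2 * n) → Bool)
    (h : IsLargestSectClan n σ s) :
    (∀ (i j : ℕ) (_ : 1 ≤ i) (hij : i < j) (hj : j ≤ n),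
      clanPair n σ i j =
        ((clanMatrix n σ).submatrix
          (Fin.castLE (show i ≤ n by omega)) (id : Fin n → Fin n)).rank) ∧
    (∀ (i j : ℕ) (_ : 1 ≤ i) (hi : i ≤ n) (hj : n < j) (hj2 : j ≤ 2 * n) (_ : i < j),
      clanPair n σ i j =
        ((clanMatrix n σ).submatrix (Fin.castLE hi)
          (Fin.castLE (show 2 * n - j ≤ n by omega))).rank) ∧
    (∀ (i j : ℕ) (hi : n < i) (hij : i < j) (hj : j ≤ 2 * n),
      clanPair n σ i j =
        ((clanMatrix n σ).submatrix (id : Fin n → Fin n)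
          (Fin.castLE (show 2 * n - j ≤ n by omega))).rank) := by
  have hcross := h.2.2
  refine ⟨fun i j _ hij hj => ?_, fun i j _ hi hj hj2 _ => ?_, fun i j hi hij hj => ?_⟩
  · rw [← Fin.castLE_rfl n]
    exact clanPair_eq_rank_clanMatrix_submatrix σ hcross _ _ (by omega) (by omega)
  · exact clanPair_eq_rank_clanMatrix_submatrix σ hcross _ _ (by omega) (by omega)
  · rw [← Fin.castLE_rfl n]
    exact clanPair_eq_rank_clanMatrix_submatrix σ hcross _ _ (by omega) (by omega)
end
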